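/- Let P be a finite poset and u, v ∈ P incomparable elements. Then the noncommutative antichain toggles and elggots at u and v commute: τ_u ∘ τ_v = τ_v ∘ τ_u, ε_u ∘ ε_v = ε_v ∘ ε_u, and τ_u ∘ ε_v = ε_v ∘ τ_u, on all S-labelings for which both sides are defined (i.e., every element inverted in the computation is nonzero). -/
import Mathlib


/-!
Noncommutative (skew field) antichain/order toggling and rowmotion on a finite poset `P`,
with labels in a division ring `S` and a fixed central element `C`, following
Joseph–Roby, "Birational and noncommutative lifts of antichain toggling and rowmotion".
All maps are partial; definedness ("every element inverted in the computation is
nonzero") is recorded by explicit predicates.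
-/

open Finset

attribute [local instance] Classical.propDecidable

variable {P : Type*} [Fintype P] [PartialOrder P] {S : Type*} [DivisionRing S]

/-- `c` is a saturated chain in `P`: consecutive entries are covers. -/
def SatChain {P : Type*} [PartialOrder P] {k : ℕ} (c : Fin (k + 1) → P) : Prop :=
  ∀ i : Fin k, c i.castSucc ⋖ c i.succ

/-- `c` is a maximal chain of `P`: a saturated chain from a minimal element to a maximal
element of `P` (equivalently, the restriction to `P` of a maximal chain
`0̂ ⋖ y₁ ⋖ ⋯ ⋖ y_k ⋖ 1̂` of `P̂`). -/
def MaxChain {P : Type*} [PartialOrder P] {k : ℕ} (c : Fin (k + 1) → P) : Prop :=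
  SatChain c ∧ IsMin (c 0) ∧ IsMax (c (Fin.last k))

/-- `∑_{u ∈ P̂, u ⋖ v} f(u)`, with the convention `f(0̂) = 1`. -/
noncomputable def lSum (f : P → S) (v : P) : S :=
  (if IsMin v then 1 else 0) + ∑ u ∈ univ.filter (fun u => u ⋖ v), f u

/-- `∑_{u ∈ P̂, u ⋗ v} f(u)⁻¹`, with the convention `f(1̂) = C`; its inverse is the
parallel sum `⫲_{u ∈ P̂, u ⋗ v} f(u)` (where `x ⫲ y = (x⁻¹ + y⁻¹)⁻¹`). -/
noncomputable def uInvSum (C : S) (f : P → S) (v : P) : S :=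
  (if IsMax v then C⁻¹ else 0) + ∑ u ∈ univ.filter (fun u => v ⋖ u), (f u)⁻¹

/-- The noncommutative order toggle `T_v`: it replaces the label at `v` by
`(∑_{u ∈ P̂, u ⋖ v} f(u)) · f(v)⁻¹ · (⫲_{u ∈ P̂, u ⋗ v} f(u))` and fixes all other
labels. -/
noncomputable def ncT (C : S) (v : P) (f : P → S) : P → S :=
  fun x => if x = v then lSum f v * (f v)⁻¹ * (uInvSum C f v)⁻¹ else f x

/-- The noncommutative order elggot `E_v`: it replaces the label at `v` by
`(⫲_{u ∈ P̂, u ⋗ v} f(u)) · f(v)⁻¹ · (∑_{u ∈ P̂, u ⋖ v} f(u))` and fixes all other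
labels. -/
noncomputable def ncE (C : S) (v : P) (f : P → S) : P → S :=
  fun x => if x = v then (uInvSum C f v)⁻¹ * (f v)⁻¹ * lSum f v else f x

/-- Definedness of one application of `T_v` or `E_v` to `f`: every element inverted in
the computation (the label `f(v)`, the labels `f(u)` of the upper covers `u` of `v` in
`P̂`, and the sum of their inverses) is nonzero. -/
def ncODef (C : S) (v : P) (f : P → S) : Prop :=
  f v ≠ 0 ∧ (∀ u : P, v ⋖ u → f u ≠ 0) ∧ (IsMax v → C ≠ 0) ∧ uInvSum C f v ≠ 0

/-- The element `∑ g(y_{c-1})⋯g(y₁) · g(y_k)⋯g(y_c)` inverted by the noncommutative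
antichain toggle `τ_v`, summed over all maximal chains `0̂ ⋖ y₁ ⋖ ⋯ ⋖ y_k ⋖ 1̂` of `P̂`
with `y_c = v` (indices decrease by 1 within each factor). -/
noncomputable def tauDenom (g : P → S) (v : P) : S :=
  ∑ k ∈ range (Fintype.card P),
    ∑ c ∈ univ.filter (fun c : Fin (k + 1) → P => MaxChain c),
      ∑ j ∈ univ.filter (fun j : Fin (k + 1) => c j = v),
        (((List.ofFn (g ∘ c)).take j.1).reverse).prod *
          (((List.ofFn (g ∘ c)).drop j.1).reverse).prod

/-- The element `∑ g(y_c)⋯g(y₁) · g(y_k)⋯g(y_{c+1})` inverted by the noncommutative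
antichain elggot `ε_v`, summed over all maximal chains `0̂ ⋖ y₁ ⋖ ⋯ ⋖ y_k ⋖ 1̂` of `P̂`
with `y_c = v`. -/
noncomputable def epsDenom (g : P → S) (v : P) : S :=
  ∑ k ∈ range (Fintype.card P),
    ∑ c ∈ univ.filter (fun c : Fin (k + 1) → P => MaxChain c),
      ∑ j ∈ univ.filter (fun j : Fin (k + 1) => c j = v),
        (((List.ofFn (g ∘ c)).take (j.1 + 1)).reverse).prod *
          (((List.ofFn (g ∘ c)).drop (j.1 + 1)).reverse).prod

/-- The noncommutative antichain toggle `τ_v`: it replaces the label at `v` by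
`C · (∑ g(y_{c-1})⋯g(y₁) · g(y_k)⋯g(y_c))⁻¹` and fixes all other labels. -/
noncomputable def ncTau (C : S) (v : P) (g : P → S) : P → S :=
  fun x => if x = v then C * (tauDenom g v)⁻¹ else g x

/-- The noncommutative antichain elggot `ε_v`: it replaces the label at `v` by
`C · (∑ g(y_c)⋯g(y₁) · g(y_k)⋯g(y_{c+1}))⁻¹` and fixes all other labels. -/
noncomputable def ncEps (C : S) (v : P) (g : P → S) : P → S :=
  fun x => if x = v then C * (epsDenom g v)⁻¹ else g x

/-- The noncommutative complement `Θ`: `(Θf)(x) = C · f(x)⁻¹`. -/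
noncomputable def ncTheta (C : S) (f : P → S) : P → S := fun x => C * (f x)⁻¹

/-- The noncommutative down transfer `∇`:
`(∇f)(x) = f(x) · (∑_{y ∈ P̂, y ⋖ x} f(y))⁻¹` with `f(0̂) = 1`. -/
noncomputable def ncNabla (f : P → S) : P → S := fun x => f x * (lSum f x)⁻¹

/-- The noncommutative inverse up transfer `Δ⁻¹`:
`(Δ⁻¹f)(x) = ∑ f(y_k)⋯f(y₂)f(y₁)` over all saturated chains
`x = y₁ ⋖ y₂ ⋖ ⋯ ⋖ y_k ⋖ 1̂` in `P̂`. -/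
noncomputable def ncDeltaInv (f : P → S) : P → S := fun x =>
  ∑ k ∈ range (Fintype.card P),
    ∑ c ∈ univ.filter (fun c : Fin (k + 1) → P =>
        SatChain c ∧ c 0 = x ∧ IsMax (c (Fin.last k))),
      ((List.ofFn (f ∘ c)).reverse).prod

/-- The noncommutative inverse down transfer `∇⁻¹`:
`(∇⁻¹f)(x) = ∑ f(y_k)⋯f(y₂)f(y₁)` over all saturated chains
`0̂ ⋖ y₁ ⋖ y₂ ⋖ ⋯ ⋖ y_k = x` in `P̂`. -/
noncomputable def ncNablaInv (f : P → S) : P → S := fun x =>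
  ∑ k ∈ range (Fintype.card P),
    ∑ c ∈ univ.filter (fun c : Fin (k + 1) → P =>
        SatChain c ∧ IsMin (c 0) ∧ c (Fin.last k) = x),
      ((List.ofFn (f ∘ c)).reverse).prod

/-- `l` is a linear extension of `P`: it lists every element of `P` exactly once, and
`l[i] < l[j]` in `P` implies `i < j`. -/
def IsLinearExtension {P : Type*} [PartialOrder P] (l : List P) : Prop :=
  l.Nodup ∧ (∀ x : P, x ∈ l) ∧
    ∀ (i j : ℕ) (hi : i < l.length) (hj : j < l.length), l[i]'hi < l[j]'hj → i < j

/-- `l` is a linear extension of the subposet `A` of `P`. -/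
def IsLinearExtensionOn {P : Type*} [PartialOrder P] (A : Set P) (l : List P) : Prop :=
  l.Nodup ∧ (∀ x : P, x ∈ l ↔ x ∈ A) ∧
    ∀ (i j : ℕ) (hi : i < l.length) (hj : j < l.length), l[i]'hi < l[j]'hj → i < j

lemma satChain_comparable' {k : ℕ} {c : Fin (k + 1) → P} (hc : SatChain c)
    (i j : Fin (k + 1)) : c i ≤ c j ∨ c j ≤ c i := by
  have hm : Monotone c :=
    (Fin.strictMono_iff_lt_succ.2 fun i => (hc i).lt).monotone
  rcases le_total i j with h | h
  · exact Or.inl (hm h)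
  · exact Or.inr (hm h)

lemma chain_comp_eq {u v : P} (h1 : ¬ u ≤ v) (h2 : ¬ v ≤ u) (g g' : P → S)
    (hg : ∀ x, x ≠ v → g' x = g x) {k : ℕ} {c : Fin (k + 1) → P}
    (hc : SatChain c) {j : Fin (k + 1)} (hj : c j = u) : g' ∘ c = g ∘ c := by
  funext i
  apply hg
  intro hv
  rcases satChain_comparable' hc i j with h | h <;> rw [hv, hj] at h
  · exact h2 h
  · exact h1 h

lemma tauDenom_congr' {u v : P} (h1 : ¬ u ≤ v) (h2 : ¬ v ≤ u) (g g' : P → S)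
    (hg : ∀ x, x ≠ v → g' x = g x) : tauDenom g' u = tauDenom g u := by
  unfold tauDenom
  refine Finset.sum_congr rfl fun k _ => Finset.sum_congr rfl fun c hc =>
    Finset.sum_congr rfl fun j hj => ?_
  simp only [mem_filter] at hc hj
  rw [chain_comp_eq h1 h2 g g' hg hc.2.1 hj.2]

lemma epsDenom_congr' {u v : P} (h1 : ¬ u ≤ v) (h2 : ¬ v ≤ u) (g g' : P → S)
    (hg : ∀ x, x ≠ v → g' x = g x) : epsDenom g' u = epsDenom g u := by
  unfold epsDenom
  refine Finset.sum_congr rfl fun k _ => Finset.sum_congr rfl fun c hc =>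
    Finset.sum_congr rfl fun j hj => ?_
  simp only [mem_filter] at hc hj
  rw [chain_comp_eq h1 h2 g g' hg hc.2.1 hj.2]

lemma ncTau_ne {C : S} {v : P} (g : P → S) (x : P) (hx : x ≠ v) :
    ncTau C v g x = g x := by simp [ncTau, hx]

lemma ncEps_ne {C : S} {v : P} (g : P → S) (x : P) (hx : x ≠ v) :
    ncEps C v g x = g x := by simp [ncEps, hx]

/-- If `u, v ∈ P` are incomparable, then the noncommutative antichain
toggles and elggots at `u` and `v` commute: `τ_u ∘ τ_v = τ_v ∘ τ_u`,
`ε_u ∘ ε_v = ε_v ∘ ε_u` and `τ_u ∘ ε_v = ε_v ∘ τ_u`, on all `S`-labelings for which both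
sides are defined. -/
theorem ncTau_ncEps_commute (C : S) (hC : ∀ s : S, C * s = s * C) (u v : P)
    (h1 : ¬ u ≤ v) (h2 : ¬ v ≤ u) (g : P → S) :
    (tauDenom g v ≠ 0 → tauDenom (ncTau C v g) u ≠ 0 →
     tauDenom g u ≠ 0 → tauDenom (ncTau C u g) v ≠ 0 →
      ncTau C u (ncTau C v g) = ncTau C v (ncTau C u g)) ∧
    (epsDenom g v ≠ 0 → epsDenom (ncEps C v g) u ≠ 0 →
     epsDenom g u ≠ 0 → epsDenom (ncEps C u g) v ≠ 0 →
      ncEps C u (ncEps C v g) = ncEps C v (ncEps C u g)) ∧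
    (epsDenom g v ≠ 0 → tauDenom (ncEps C v g) u ≠ 0 →
     tauDenom g u ≠ 0 → epsDenom (ncTau C u g) v ≠ 0 →
      ncTau C u (ncEps C v g) = ncEps C v (ncTau C u g)) := by
  have huv : u ≠ v := fun h => h1 (h ▸ le_refl u)
  refine ⟨fun _ _ _ _ => ?_, fun _ _ _ _ => ?_, fun _ _ _ _ => ?_⟩
  · have hA : tauDenom (ncTau C v g) u = tauDenom g u :=
      tauDenom_congr' h1 h2 g _ (fun x hx => ncTau_ne g x hx)
    have hB : tauDenom (ncTau C u g) v = tauDenom g v :=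
      tauDenom_congr' h2 h1 g _ (fun x hx => ncTau_ne g x hx)
    funext x
    show (if x = u then C * (tauDenom (ncTau C v g) u)⁻¹ else ncTau C v g x)
      = (if x = v then C * (tauDenom (ncTau C u g) v)⁻¹ else ncTau C u g x)
    rw [hA, hB]
    unfold ncTau
    split_ifs <;> simp_all
  · have hA : epsDenom (ncEps C v g) u = epsDenom g u :=
      epsDenom_congr' h1 h2 g _ (fun x hx => ncEps_ne g x hx)
    have hB : epsDenom (ncEps C u g) v = epsDenom g v :=
      epsDenom_congr' h2 h1 g _ (fun x hx => ncEps_ne g x hx)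
    funext x
    show (if x = u then C * (epsDenom (ncEps C v g) u)⁻¹ else ncEps C v g x)
      = (if x = v then C * (epsDenom (ncEps C u g) v)⁻¹ else ncEps C u g x)
    rw [hA, hB]
    unfold ncEps
    split_ifs <;> simp_all
  · have hA : tauDenom (ncEps C v g) u = tauDenom g u :=
      tauDenom_congr' h1 h2 g _ (fun x hx => ncEps_ne g x hx)
    have hB : epsDenom (ncTau C u g) v = epsDenom g v :=
      epsDenom_congr' h2 h1 g _ (fun x hx => ncTau_ne g x hx)
    funext x
    show (if x = u then C * (tauDenom (ncEps C v g) u)⁻¹ else ncEps C v g x)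
      = (if x = v then C * (epsDenom (ncTau C u g) v)⁻¹ else ncTau C u g x)
    rw [hA, hB]
    unfold ncTau ncEps
    split_ifs <;> simp_all
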